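/- arXiv:0812.2596 — 6 statements merged into one kernel-verified Lean document; each statement's English description precedes it below -/
import Mathlib

section
/- If N = 2^e·t + 1 with t odd and 2^e > t > 0, and there exists an integer a with a^((N-1)/2) ≡ -1 (mod N), then N is prime. -/
/-!
Let `p` be a prime factor of `N = 2^e t + 1` and `b` the image of `a` in `ZMod p`. Since
`b^(2^(e-1) t) = -1`, the element `b^t` has order exactly `2^e`, so `2^e ∣ p - 1` by Fermat and
hence `p > 2^e`. Every prime factor of `N` then has square at least `(2^e + 1)^2 > 2^e t + 1 = N`,
so `N` has no prime factor below its square root.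
-/

theorem orderOf_eq_two_pow_succ_of_pow_two_pow_eq_neg_one {M : Type*} [Monoid M] [HasDistribNeg M]
    (hM : (-1 : M) ≠ 1) {x : M} {k : ℕ} (hx : x ^ 2 ^ k = -1) : orderOf x = 2 ^ (k + 1) :=
  orderOf_eq_prime_pow (hx ▸ hM) (by rw [pow_succ, pow_mul, hx, neg_one_sq])

theorem ZMod.two_pow_succ_dvd_sub_one_of_pow_eq_neg_one {p k m : ℕ} [Fact p.Prime]
    (hp : p ≠ 2) {b : ZMod p} (hb : b ^ (2 ^ k * m) = -1) : 2 ^ (k + 1) ∣ p - 1 := by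
  have : Fact (2 < p) := ⟨lt_of_le_of_ne (Fact.out : p.Prime).two_le (Ne.symm hp)⟩
  have hbm : (b ^ m) ^ 2 ^ k = -1 := by rw [← pow_mul, mul_comm, hb]
  have hb0 : b ^ m ≠ 0 := by
    rintro h
    rw [h, zero_pow (pow_ne_zero _ two_ne_zero)] at hbm
    exact one_ne_zero (neg_eq_zero.mp hbm.symm)
  rw [← orderOf_eq_two_pow_succ_of_pow_two_pow_eq_neg_one ZMod.neg_one_ne_one hbm]
  exact ZMod.orderOf_dvd_card_sub_one hb0

theorem two_pow_succ_dvd_sub_one_of_prime_dvd {N k m p : ℕ} (hN : N = 2 ^ (k + 1) * m + 1)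
    {x : ZMod N} (hx : x ^ (2 ^ k * m) = -1) (hp : p.Prime) (hpN : p ∣ N) :
    2 ^ (k + 1) ∣ p - 1 := by
  have : Fact p.Prime := ⟨hp⟩
  have hp2 : p ≠ 2 := by
    rintro rfl
    have h2 : 2 ∣ 2 ^ (k + 1) * m := dvd_mul_of_dvd_left (dvd_pow_self 2 k.succ_ne_zero) m
    exact absurd ((Nat.dvd_add_right h2).mp (hN ▸ hpN)) (by decide)
  apply ZMod.two_pow_succ_dvd_sub_one_of_pow_eq_neg_one hp2 (b := ZMod.castHom hpN (ZMod p) x)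
  rw [← map_pow, hx, map_neg, map_one]

theorem Nat.prime_of_forall_prime_dvd_lt_sq {n : ℕ} (hn : 1 < n)
    (h : ∀ p, p.Prime → p ∣ n → n < p ^ 2) : n.Prime := by
  by_contra hnp
  have hmin := h _ (Nat.minFac_prime hn.ne') (Nat.minFac_dvd n)
  exact absurd (Nat.minFac_sq_le_self (by omega) hnp) (not_le.mpr hmin)

theorem proth_theorem_general (N e t : ℕ) (htpos : 0 < t) (hlt : t < 2 ^ e)
    (hN : N = 2 ^ e * t + 1) (ha : ∃ a : ℤ, (a : ZMod N) ^ ((N - 1) / 2) = -1) :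
    N.Prime := by
  obtain ⟨a, ha⟩ := ha
  obtain ⟨k, rfl⟩ : ∃ k, e = k + 1 := Nat.exists_eq_succ_of_ne_zero (by rintro rfl; omega)
  have hhalf : (N - 1) / 2 = 2 ^ k * t := by
    rw [hN, Nat.add_sub_cancel, pow_succ, mul_right_comm, Nat.mul_div_cancel _ two_pos]
  rw [hhalf] at ha
  refine Nat.prime_of_forall_prime_dvd_lt_sq (by rw [hN]; nlinarith [Nat.one_le_two_pow (n := k + 1)]) fun p hp hpN => ?_
  have hdvd := two_pow_succ_dvd_sub_one_of_prime_dvd hN ha hp hpN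
  have hle : 2 ^ (k + 1) + 1 ≤ p := by
    have := Nat.le_of_dvd (Nat.sub_pos_of_lt hp.one_lt) hdvd
    omega
  rw [hN]
  nlinarith

/-- Proth's theorem: if `N = 2^e * t + 1` with `t` odd and `2^e > t > 0`, and some
integer `a` satisfies `a^((N-1)/2) ≡ -1 (mod N)`, then `N` is prime. -/
theorem proth_theorem (N e t : ℕ) (ht : Odd t) (htpos : 0 < t) (hlt : t < 2 ^ e)
    (hN : N = 2 ^ e * t + 1) (ha : ∃ a : ℤ, (a : ZMod N) ^ ((N - 1) / 2) = -1) :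
    N.Prime :=
  proth_theorem_general N e t htpos hlt hN ha
end

section
/- Let N be an odd prime and let α be an integer with α² ≢ 0 (mod N). Define G'_α to be the set of residues a mod N with a ≢ ±α (mod N), and G_α = G'_α ∪ {∞}, with operation: ∞ is the identity, [a]·[-a] = ∞, and [a₁]·[a₂] = [(a₁a₂ + α²)(a₁ + a₂)^(-1)] when a₁ + a₂ ≢ 0 (mod N). Then the map ψ : G_α → (Z/NZ)^× sending ∞ to 1 and [a] to (a+α)(a-α)^(-1) is a group isomorphism. -/
/-!
`ψ` is the Cayley transform `a ↦ (a + α)(a - α)⁻¹`. For `c = ±α` one has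
`(ab + α²)(a + b)⁻¹ - c = (a - c)(b - c)(a + b)⁻¹`, so the transform carries the operation of
`G_α` to multiplication; its inverse is `z ↦ α(z + 1)(z - 1)⁻¹`, with `∞ ↔ 1`.
-/

/-- The group operation on `G_α`: `∞` (encoded as `none`) is the identity,
`[a]·[-a] = ∞`, and `[a₁]·[a₂] = [(a₁a₂ + α²)(a₁+a₂)⁻¹]` otherwise. -/
def gmulFn {N : ℕ} (α : ZMod N) : Option (ZMod N) → Option (ZMod N) → Option (ZMod N)
  | none, x => x
  | some a, none => some a
  | some a, some b => if a + b = 0 then none else some ((a * b + α ^ 2) * (a + b)⁻¹)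

/-- The map `ψ : G_α → (Z/NZ)ˣ`, `∞ ↦ 1`, `[a] ↦ (a+α)(a-α)⁻¹`. -/
def psiFn {N : ℕ} (α : ZMod N) : Option (ZMod N) → ZMod N
  | none => 1
  | some a => (a + α) * (a - α)⁻¹

section Cayley

variable {K : Type*} [Field K] {α a b c z : K}

theorem mul_add_sq_mul_inv_sub (hab : a + b ≠ 0) (hc : c ^ 2 = α ^ 2) :
    (a * b + α ^ 2) * (a + b)⁻¹ - c = (a - c) * (b - c) * (a + b)⁻¹ := by
  field_simp
  linear_combination -hc

theorem mul_add_sq_mul_inv_ne (hab : a + b ≠ 0) (hc : c ^ 2 = α ^ 2) (ha : a ≠ c)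
    (hb : b ≠ c) : (a * b + α ^ 2) * (a + b)⁻¹ ≠ c := by
  rw [← sub_ne_zero, mul_add_sq_mul_inv_sub hab hc]
  exact mul_ne_zero (mul_ne_zero (sub_ne_zero.2 ha) (sub_ne_zero.2 hb)) (inv_ne_zero hab)

def cayley (α a : K) : K := (a + α) * (a - α)⁻¹

def cayleyInv (α z : K) : K := α * (z + 1) * (z - 1)⁻¹

theorem cayley_ne_zero (ha : a ≠ α) (ha' : a ≠ -α) : cayley α a ≠ 0 :=
  mul_ne_zero (by rwa [← sub_neg_eq_add, sub_ne_zero]) (inv_ne_zero (sub_ne_zero.2 ha))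

theorem cayley_mul_add_sq_mul_inv (hab : a + b ≠ 0) (ha : a ≠ α) (hb : b ≠ α) :
    cayley α ((a * b + α ^ 2) * (a + b)⁻¹) = cayley α a * cayley α b := by
  have ha : a - α ≠ 0 := sub_ne_zero.2 ha
  have hb : b - α ≠ 0 := sub_ne_zero.2 hb
  have hplus := mul_add_sq_mul_inv_sub hab (neg_sq α)
  simp only [sub_neg_eq_add] at hplus
  rw [cayley, hplus, mul_add_sq_mul_inv_sub hab rfl, cayley, cayley]
  field_simp

theorem cayley_mul_cayley_neg (ha : a ≠ α) (ha' : a ≠ -α) : cayley α a * cayley α (-a) = 1 := by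
  have ha : a - α ≠ 0 := sub_ne_zero.2 ha
  have ha' : -a - α ≠ 0 := fun h => ha' (by linear_combination -h)
  rw [cayley, cayley]
  field_simp
  ring

variable (h2 : (2 : K) ≠ 0) (hα : α ≠ 0)
include h2 hα

theorem cayley_ne_one (ha : a ≠ α) : cayley α a ≠ 1 := by
  rw [cayley, Ne, mul_inv_eq_one₀ (sub_ne_zero.2 ha)]
  intro h
  exact mul_ne_zero h2 hα (by linear_combination h)

theorem cayleyInv_ne (hz : z ≠ 1) : cayleyInv α z ≠ α := by
  rw [cayleyInv, Ne, mul_inv_eq_iff_eq_mul₀ (sub_ne_zero.2 hz)]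
  intro h
  exact mul_ne_zero h2 hα (by linear_combination h)

theorem cayleyInv_ne_neg (hz0 : z ≠ 0) (hz1 : z ≠ 1) : cayleyInv α z ≠ -α := by
  rw [cayleyInv, Ne, mul_inv_eq_iff_eq_mul₀ (sub_ne_zero.2 hz1)]
  intro h
  exact mul_ne_zero (mul_ne_zero h2 hα) hz0 (by linear_combination h)

theorem cayleyInv_cayley (ha : a ≠ α) : cayleyInv α (cayley α a) = a := by
  have ha : a - α ≠ 0 := sub_ne_zero.2 ha
  rw [cayleyInv, cayley]
  field_simp
  rw [show a + α - (a - α) = 2 * α by ring]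
  field_simp
  ring

theorem cayley_cayleyInv (hz : z ≠ 1) : cayley α (cayleyInv α z) = z := by
  have hz : z - 1 ≠ 0 := sub_ne_zero.2 hz
  rw [cayleyInv, cayley]
  field_simp
  rw [show z + 1 - (z - 1) = 2 by ring]
  field_simp
  ring

end Cayley

section GAlpha

variable {N : ℕ} [Fact N.Prime] {α : ZMod N}

@[simp]
theorem psiFn_some (a : ZMod N) : psiFn α (some a) = cayley α a := rfl

def gAlpha (α : ZMod N) : Set (Option (ZMod N)) := {x | ∀ a, x = some a → a ≠ α ∧ a ≠ -α}

@[simp]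
theorem none_mem_gAlpha : none ∈ gAlpha α := by simp [gAlpha]

@[simp]
theorem some_mem_gAlpha {a : ZMod N} : some a ∈ gAlpha α ↔ a ≠ α ∧ a ≠ -α := by
  simp [gAlpha]

theorem gmulFn_mem_gAlpha {x y : Option (ZMod N)} (hx : x ∈ gAlpha α) (hy : y ∈ gAlpha α) :
    gmulFn α x y ∈ gAlpha α := by
  rcases x with _ | a
  · exact hy
  rcases y with _ | b
  · exact hx
  rw [some_mem_gAlpha] at hx hy
  rw [gmulFn]
  split_ifs with hab
  · exact none_mem_gAlpha
  · exact some_mem_gAlpha.2 ⟨mul_add_sq_mul_inv_ne hab rfl hx.1 hy.1,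
      mul_add_sq_mul_inv_ne hab (neg_sq α) hx.2 hy.2⟩

theorem psiFn_gmulFn {x y : Option (ZMod N)} (hx : x ∈ gAlpha α) (hy : y ∈ gAlpha α) :
    psiFn α (gmulFn α x y) = psiFn α x * psiFn α y := by
  rcases x with _ | a
  · simp [gmulFn, psiFn]
  rcases y with _ | b
  · simp [gmulFn, psiFn]
  rw [some_mem_gAlpha] at hx hy
  rw [gmulFn]
  split_ifs with hab
  · obtain rfl : b = -a := eq_neg_of_add_eq_zero_right hab
    exact (cayley_mul_cayley_neg hx.1 hx.2).symm
  · exact cayley_mul_add_sq_mul_inv hab hx.1 hy.1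

theorem mapsTo_psiFn : Set.MapsTo (psiFn α) (gAlpha α) {z | z ≠ 0} := by
  rintro (_ | a) ha
  · exact one_ne_zero
  · rw [some_mem_gAlpha] at ha
    exact cayley_ne_zero ha.1 ha.2

def psiInvFn (α z : ZMod N) : Option (ZMod N) := if z = 1 then none else some (cayleyInv α z)

variable (h2 : (2 : ZMod N) ≠ 0) (hα : α ≠ 0)
include h2 hα

theorem mapsTo_psiInvFn : Set.MapsTo (psiInvFn α) {z | z ≠ 0} (gAlpha α) := by
  intro z hz0
  unfold psiInvFn
  split_ifs with hz1
  · exact none_mem_gAlpha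
  · exact some_mem_gAlpha.2 ⟨cayleyInv_ne h2 hα hz1, cayleyInv_ne_neg h2 hα hz0 hz1⟩

theorem invOn_psiInvFn : Set.InvOn (psiInvFn α) (psiFn α) (gAlpha α) {z | z ≠ 0} := by
  constructor
  · rintro (_ | a) ha
    · simp [psiFn, psiInvFn]
    · rw [some_mem_gAlpha] at ha
      rw [psiFn_some, psiInvFn, if_neg (cayley_ne_one h2 hα ha.1), cayleyInv_cayley h2 hα ha.1]
  · intro z _
    unfold psiInvFn
    split_ifs with hz1
    · exact hz1.symm
    · exact cayley_cayleyInv h2 hα hz1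

end GAlpha

theorem ZMod.two_ne_zero_of_odd {N : ℕ} [Fact (1 < N)] (hodd : Odd N) : (2 : ZMod N) ≠ 0 :=
  Ring.two_ne_zero <| by
    rw [ZMod.ringChar_zmod_n]
    rintro rfl
    exact absurd hodd (by decide)

/-- For an odd prime `N` and `α ≠ 0`, the set `G_α = {∞} ∪ {a : a ≠ ±α}` is closed
under the operation, and `ψ` is a group isomorphism from `G_α` onto the multiplicative
group `(Z/NZ)ˣ` (the nonzero residues): it is bijective and multiplicative. -/
theorem psi_group_isomorphism {N : ℕ} (hN : N.Prime) (hodd : Odd N)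
    (α : ZMod N) (hα : α ^ 2 ≠ 0) :
    (∀ x ∈ {x : Option (ZMod N) | ∀ a, x = some a → a ≠ α ∧ a ≠ -α},
      ∀ y ∈ {x : Option (ZMod N) | ∀ a, x = some a → a ≠ α ∧ a ≠ -α},
        gmulFn α x y ∈ {x : Option (ZMod N) | ∀ a, x = some a → a ≠ α ∧ a ≠ -α}) ∧
    Set.BijOn (psiFn α) {x : Option (ZMod N) | ∀ a, x = some a → a ≠ α ∧ a ≠ -α}
      {z : ZMod N | z ≠ 0} ∧
    (∀ x ∈ {x : Option (ZMod N) | ∀ a, x = some a → a ≠ α ∧ a ≠ -α},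
      ∀ y ∈ {x : Option (ZMod N) | ∀ a, x = some a → a ≠ α ∧ a ≠ -α},
        psiFn α (gmulFn α x y) = psiFn α x * psiFn α y) := by
  have := Fact.mk hN
  have h2 := ZMod.two_ne_zero_of_odd hodd
  have hα0 : α ≠ 0 := pow_ne_zero_iff two_ne_zero |>.1 hα
  exact ⟨fun _ hx _ hy => gmulFn_mem_gAlpha hx hy,
    (invOn_psiInvFn h2 hα0).bijOn mapsTo_psiFn (mapsTo_psiInvFn h2 hα0),
    fun _ hx _ hy => psiFn_gmulFn hx hy⟩
end

section
/- Let N be an integer, β an integer with 0 < β < N, and a₁, a₂ integers with a₁² ≢ β (mod N) and a₂² ≢ β (mod N). If a ≡ (a₁a₂ + β)(a₁ + a₂)^(-1) (mod N) satisfies a² ≡ β (mod N) (where a₁ + a₂ is invertible mod N), then N is composite. -/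
/-!
If `a = (a₁a₂ + β)/(a₁ + a₂)` and `a² = β`, then `a(a₁ + a₂) = a₁a₂ + a²`, i.e.
`(a₁ - a)(a₂ - a) = 0`. Modulo a prime this forces `a₁ = a` or `a₂ = a`, so one of
`a₁², a₂²` would be `β`.
-/

theorem eq_or_eq_of_mul_add_eq_mul_add_sq {R : Type*} [CommRing R] [NoZeroDivisors R]
    {a x y : R} (h : a * (x + y) = x * y + a ^ 2) : x = a ∨ y = a := by
  have hprod : (x - a) * (y - a) = 0 := by linear_combination -h
  simpa only [sub_eq_zero] using mul_eq_zero.mp hprod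

theorem sq_eq_or_sq_eq_of_sq_mul_inv_eq {K : Type*} [Field K] {b x y : K} (hxy : x + y ≠ 0)
    (h : ((x * y + b) * (x + y)⁻¹) ^ 2 = b) : x ^ 2 = b ∨ y ^ 2 = b := by
  set a := (x * y + b) * (x + y)⁻¹
  have ha : a * (x + y) = x * y + a ^ 2 := by
    rw [h, mul_assoc, inv_mul_cancel₀ hxy, mul_one]
  rcases eq_or_eq_of_mul_add_eq_mul_add_sq ha with hx | hy
  · exact .inl (hx ▸ h)
  · exact .inr (hy ▸ h)

theorem composite_of_sqrt_found_general (N : ℕ) (β a₁ a₂ : ℤ)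
    (h1 : ((a₁ : ZMod N)) ^ 2 ≠ (β : ZMod N)) (h2 : ((a₂ : ZMod N)) ^ 2 ≠ (β : ZMod N))
    (hu : IsUnit ((a₁ : ZMod N) + (a₂ : ZMod N)))
    (ha : (((a₁ : ZMod N) * a₂ + β) * ((a₁ : ZMod N) + a₂)⁻¹) ^ 2 = (β : ZMod N)) :
    ¬ N.Prime := by
  intro hp
  have := Fact.mk hp
  exact (sq_eq_or_sq_eq_of_sq_mul_inv_eq hu.ne_zero ha).elim h1 h2

/-- If `0 < β < N`, `a₁² ≢ β`, `a₂² ≢ β (mod N)`, `a₁ + a₂` is invertible mod `N`, and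
`a = (a₁a₂ + β)(a₁+a₂)⁻¹` satisfies `a² ≡ β (mod N)`, then `N` is composite. -/
theorem composite_of_sqrt_found (N : ℕ) (β a₁ a₂ : ℤ) (hβ : 0 < β) (hβN : β < N)
    (h1 : ((a₁ : ZMod N)) ^ 2 ≠ (β : ZMod N)) (h2 : ((a₂ : ZMod N)) ^ 2 ≠ (β : ZMod N))
    (hu : IsUnit ((a₁ : ZMod N) + (a₂ : ZMod N)))
    (ha : (((a₁ : ZMod N) * a₂ + β) * ((a₁ : ZMod N) + a₂)⁻¹) ^ 2 = (β : ZMod N)) :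
    ¬ N.Prime :=
  composite_of_sqrt_found_general N β a₁ a₂ h1 h2 hu ha
end

section
/- Let N be an odd prime, β a quadratic residue mod N with β ≡ α² (mod N), and b an integer with b² ≡ -1 (mod N). If a is an integer representing an element of order exactly 4 in the group G_α, then a(b-1)(b+1)^(-1) ≡ ±α (mod N); in particular (a(b-1)(b+1)^(-1))² ≡ β (mod N). -/
/-!
An element `[a]` of `G_α` has order exactly 4 iff `[a]² = [(a² + α²)(2a)⁻¹]` is the element of
order 2, namely `[0]`, i.e. iff `a² = -α²`. Since `b² = -1`, the factor `(b - 1)(b + 1)⁻¹` is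
just `b` (multiply through by `b - 1`), so `a(b - 1)(b + 1)⁻¹ = ab` and `(ab)² = -a² = α²`.
-/

section Field

variable {F : Type*} [Field F]

theorem two_ne_zero_of_add_self_ne_zero {a : F} (h : a + a ≠ 0) : (2 : F) ≠ 0 := by
  rintro h2
  exact h (by rw [← two_mul, h2, zero_mul])

theorem eq_zero_of_add_self_eq_zero {s : F} (h2 : (2 : F) ≠ 0) (h : s + s = 0) : s = 0 := by
  rw [← two_mul] at h
  exact (mul_eq_zero.mp h).resolve_left h2

theorem sub_one_mul_add_one_inv_of_sq_eq_neg_one {b : F} (h2 : (2 : F) ≠ 0) (hb : b ^ 2 = -1) :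
    (b - 1) * (b + 1)⁻¹ = b := by
  have hb1 : b + 1 ≠ 0 := by
    intro h
    apply h2
    linear_combination hb - (b - 1) * h
  field_simp
  linear_combination -hb

end Field

section GAlpha

variable {N : ℕ} (α : ZMod N)

theorem gmulFn_some_some_eq_none_iff (a c : ZMod N) :
    gmulFn α (some a) (some c) = none ↔ a + c = 0 := by
  simp [gmulFn]

theorem gmulFn_some_some_of_add_ne_zero {a c : ZMod N} (h : a + c ≠ 0) :
    gmulFn α (some a) (some c) = some ((a * c + α ^ 2) * (a + c)⁻¹) := by
  simp [gmulFn, h]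

variable {α}

theorem add_self_ne_zero_of_gmulFn_ne_none {a : ZMod N} (h2 : gmulFn α (some a) (some a) ≠ none) :
    a + a ≠ 0 :=
  (gmulFn_some_some_eq_none_iff α a a).not.mp h2

theorem sq_eq_neg_sq_of_gmulFn_order_four [Fact N.Prime] {a : ZMod N}
    (h2 : gmulFn α (some a) (some a) ≠ none)
    (h4 : gmulFn α (gmulFn α (some a) (some a)) (gmulFn α (some a) (some a)) = none) :
    a ^ 2 = -α ^ 2 := by
  have haa := add_self_ne_zero_of_gmulFn_ne_none h2
  rw [gmulFn_some_some_of_add_ne_zero α haa, gmulFn_some_some_eq_none_iff] at h4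
  have hs := eq_zero_of_add_self_eq_zero (two_ne_zero_of_add_self_ne_zero haa) h4
  rw [mul_eq_zero, inv_eq_zero] at hs
  linear_combination hs.resolve_right haa

end GAlpha

theorem order_four_gives_sqrt_general {N : ℕ} (hN : N.Prime)
    (α β b a : ZMod N) (hβ : β = α ^ 2) (hb : b ^ 2 = -1)
    (h2 : gmulFn α (some a) (some a) ≠ none)
    (h4 : gmulFn α (gmulFn α (some a) (some a)) (gmulFn α (some a) (some a)) = none) :
    (a * (b - 1) * (b + 1)⁻¹ = α ∨ a * (b - 1) * (b + 1)⁻¹ = -α) ∧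
      (a * (b - 1) * (b + 1)⁻¹) ^ 2 = β := by
  have := Fact.mk hN
  have ha := sq_eq_neg_sq_of_gmulFn_order_four h2 h4
  have h2' := two_ne_zero_of_add_self_ne_zero (add_self_ne_zero_of_gmulFn_ne_none h2)
  rw [mul_assoc, sub_one_mul_add_one_inv_of_sq_eq_neg_one h2' hb]
  have hsq : (a * b) ^ 2 = α ^ 2 := by linear_combination a ^ 2 * hb - ha
  exact ⟨sq_eq_sq_iff_eq_or_eq_neg.mp hsq, hsq.trans hβ.symm⟩

/-- Let `N` be an odd prime, `β ≡ α² (mod N)`, and `b² ≡ -1 (mod N)`. If `[a]` has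
order exactly 4 in `G_α` (its square is not the identity `∞` but its fourth power is),
then `a(b-1)(b+1)⁻¹ ≡ ±α (mod N)`; in particular `(a(b-1)(b+1)⁻¹)² ≡ β (mod N)`. -/
theorem order_four_gives_sqrt {N : ℕ} (hN : N.Prime) (hodd : Odd N)
    (α β b a : ZMod N) (hβ : β = α ^ 2) (hb : b ^ 2 = -1)
    (ha : a ≠ α ∧ a ≠ -α)
    (h2 : gmulFn α (some a) (some a) ≠ none)
    (h4 : gmulFn α (gmulFn α (some a) (some a)) (gmulFn α (some a) (some a)) = none) :
    (a * (b - 1) * (b + 1)⁻¹ = α ∨ a * (b - 1) * (b + 1)⁻¹ = -α) ∧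
      (a * (b - 1) * (b + 1)⁻¹) ^ 2 = β :=
  order_four_gives_sqrt_general hN α β b a hβ hb h2 h4
end

section
/- Let p = 2^(e')·t' + 1 be an odd prime with t' odd and e' ≥ 1, and let d be a positive divisor of t'. Then the sum of v₂(ord_p(a)) over all integers a with 1 < a < p-1 and a^(2d) ≢ 1 (mod p) equals (e'-1)(p-1) + t' - d. -/
/-!
Pass to the cyclic group `(ZMod p)ˣ` of order `2 ^ e * t`. Since `t` is odd, an element `g`
satisfies `g ^ (2 ^ k * t) = 1` iff `v₂ (orderOf g) ≤ k`, and a cyclic group has exactly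
`2 ^ k * t` such elements. Writing `v₂ (orderOf g)` as the number of `k < e` below it and
swapping the sums gives `∑ g, v₂ (orderOf g) = e * 2 ^ e * t - (2 ^ e - 1) * t`.
The excluded elements, `g ^ (2 * d) = 1`, have `v₂ (orderOf g) ≤ 1` with equality unless
`g ^ d = 1`, so they contribute `2 * d - d = d`. The residues `1` and `p - 1` are among them,
and the residue `0` would contribute `v₂ 0 = 0`, so the range `1 < a < p - 1` is harmless.
-/

open Finset

theorem Nat.dvd_two_pow_mul_iff_padicValNat_le {n e k t : ℕ} (ht : Odd t)
    (hn : n ∣ 2 ^ e * t) : n ∣ 2 ^ k * t ↔ padicValNat 2 n ≤ k := by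
  obtain ⟨v, m, hm, rfl⟩ :=
    Nat.exists_eq_two_pow_mul_odd (ne_zero_of_dvd_ne_zero (by have := ht.pos; positivity) hn)
  have hvm : padicValNat 2 (2 ^ v * m) = v := by
    rw [padicValNat.mul (by positivity) hm.pos.ne', padicValNat.prime_pow,
      padicValNat.eq_zero_of_not_dvd hm.not_two_dvd_nat, add_zero]
  have hmt : m ∣ t := (Nat.Coprime.pow_right e (Nat.coprime_two_right.mpr hm)).dvd_of_dvd_mul_left
    (dvd_of_mul_left_dvd hn)
  rw [hvm]
  refine ⟨fun h => ?_, fun h => mul_dvd_mul (pow_dvd_pow 2 h) hmt⟩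
  have h2v : 2 ^ v ∣ 2 ^ k :=
    (Nat.Coprime.pow_left v (Nat.coprime_two_left.mpr ht)).dvd_of_dvd_mul_right
      (dvd_of_mul_right_dvd h)
  exact (Nat.pow_dvd_pow_iff_le_right one_lt_two).mp h2v

theorem pow_two_pow_mul_eq_one_iff {G : Type*} [Monoid G] {g : G} {e k t : ℕ} (ht : Odd t)
    (hg : g ^ (2 ^ e * t) = 1) : g ^ (2 ^ k * t) = 1 ↔ padicValNat 2 (orderOf g) ≤ k := by
  rw [← orderOf_dvd_iff_pow_eq_one]
  exact Nat.dvd_two_pow_mul_iff_padicValNat_le ht (orderOf_dvd_of_pow_eq_one hg)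

theorem Nat.sum_range_two_pow_add_one (n : ℕ) : ∑ k ∈ range n, 2 ^ k + 1 = 2 ^ n := by
  rw [Nat.geomSum_eq le_rfl, Nat.div_one, Nat.sub_add_cancel Nat.one_le_two_pow]

theorem Nat.card_filter_range_lt {n m : ℕ} (h : m ≤ n) : #{k ∈ range n | k < m} = m := by
  rw [show {k ∈ range n | k < m} = range m by ext; simp only [mem_filter, mem_range]; omega,
    card_range]

namespace IsCyclic

variable {G : Type*} [CommGroup G] [Fintype G] [DecidableEq G] [IsCyclic G]

theorem card_filter_pow_eq_one (m : ℕ) : #{g : G | g ^ m = 1} = (Fintype.card G).gcd m := by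
  rw [← Nat.card_eq_fintype_card, ← card_powMonoidHom_ker, ← Fintype.card_subtype,
    ← Nat.card_eq_fintype_card]
  rfl

theorem card_filter_padicValNat_orderOf_le {e t k : ℕ} (ht : Odd t)
    (hG : Fintype.card G = 2 ^ e * t) (hk : k ≤ e) :
    #{g : G | padicValNat 2 (orderOf g) ≤ k} = 2 ^ k * t := by
  have hg (g : G) : g ^ (2 ^ e * t) = 1 := hG ▸ pow_card_eq_one
  simp_rw [← pow_two_pow_mul_eq_one_iff ht (hg _), card_filter_pow_eq_one, hG]
  exact Nat.gcd_eq_right (mul_dvd_mul_right (pow_dvd_pow 2 hk) t)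

theorem sum_padicValNat_orderOf {e t : ℕ} (ht : Odd t) (hG : Fintype.card G = 2 ^ e * t) :
    ∑ g : G, padicValNat 2 (orderOf g) + 2 ^ e * t = e * (2 ^ e * t) + t := by
  have hle (g : G) : padicValNat 2 (orderOf g) ≤ e :=
    (pow_two_pow_mul_eq_one_iff ht (hG ▸ pow_card_eq_one)).mp (hG ▸ pow_card_eq_one)
  have hlayer : ∑ g : G, padicValNat 2 (orderOf g) =
      ∑ k ∈ range e, #{g : G | k < padicValNat 2 (orderOf g)} := by
    simp_rw [card_filter]
    rw [sum_comm]
    exact sum_congr rfl fun g _ => by rw [← card_filter, Nat.card_filter_range_lt (hle g)]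
  calc ∑ g : G, padicValNat 2 (orderOf g) + 2 ^ e * t
      = ∑ k ∈ range e, (#{g : G | k < padicValNat 2 (orderOf g)} +
          #{g : G | ¬k < padicValNat 2 (orderOf g)}) + t := by
        rw [hlayer, ← Nat.sum_range_two_pow_add_one, add_mul, sum_mul, ← add_assoc,
          ← sum_add_distrib, one_mul]
        refine congrArg (· + t) (sum_congr rfl fun k hk => ?_)
        rw [← card_filter_padicValNat_orderOf_le ht hG (mem_range.mp hk).le]
        simp only [not_lt]
    _ = e * (2 ^ e * t) + t := by
        simp only [card_filter_add_card_filter_not, card_univ, hG, sum_const, card_range,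
          smul_eq_mul]

theorem sum_padicValNat_orderOf_of_pow_two_mul_eq_one {d : ℕ} (hd : Odd d)
    (hdG : 2 * d ∣ Fintype.card G) :
    ∑ g : G with g ^ (2 * d) = 1, padicValNat 2 (orderOf g) = d := by
  have hval {g : G} (hg : g ^ (2 * d) = 1) :
      padicValNat 2 (orderOf g) = if ¬g ^ d = 1 then 1 else 0 := by
    have hg' : g ^ (2 ^ 1 * d) = 1 := by rwa [pow_one]
    have hle_zero := pow_two_pow_mul_eq_one_iff (k := 0) hd hg'
    have hle_one := (pow_two_pow_mul_eq_one_iff (k := 1) hd hg').mp hg'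
    rw [pow_zero, one_mul] at hle_zero
    split_ifs with h
    · exact Nat.le_zero.mp (hle_zero.mp h)
    · exact le_antisymm hle_one (Nat.one_le_iff_ne_zero.mpr fun h0 => h (hle_zero.mpr h0.le))
  have hroots : ({g : G | g ^ (2 * d) = 1} : Finset G).filter (· ^ d = 1) =
      ({g : G | g ^ d = 1} : Finset G) := by
    ext g
    simp only [mem_filter, mem_univ, true_and, and_iff_right_iff_imp]
    intro h
    rw [pow_mul', h, one_pow]
  have hsplit := card_filter_add_card_filter_not (s := {g : G | g ^ (2 * d) = 1}) (· ^ d = 1)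
  rw [hroots, card_filter_pow_eq_one, card_filter_pow_eq_one, Nat.gcd_eq_right hdG,
    Nat.gcd_eq_right (dvd_of_mul_left_dvd hdG)] at hsplit
  rw [sum_congr rfl fun g hg => hval (mem_filter.mp hg).2, ← card_filter]
  omega

end IsCyclic

theorem Fintype.sum_units_eq_sum {G₀ M : Type*} [GroupWithZero G₀] [Fintype G₀]
    [DecidableEq G₀] [AddCommMonoid M] {f : G₀ → M} (h0 : f 0 = 0) :
    ∑ u : G₀ˣ, f u = ∑ x, f x :=
  calc ∑ u : G₀ˣ, f u = ∑ x : {x : G₀ // x ≠ 0}, f x :=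
        Fintype.sum_equiv unitsEquivNeZero _ _ fun _ => rfl
    _ = ∑ x with x ≠ 0, f x := (sum_subtype _ (by simp) f).symm
    _ = ∑ x, f x := sum_filter_of_ne fun x _ hx h => hx (h ▸ h0)

theorem ZMod.sum_Ioo_eq_sum {p : ℕ} [NeZero p] {M : Type*} [AddCommMonoid M] {f : ZMod p → M}
    (h0 : f 0 = 0) (h1 : f 1 = 0) (hm1 : f (-1) = 0) : ∑ a ∈ Ioo 1 (p - 1), f a = ∑ x, f x := by
  have hcast : ((p - 1 : ℕ) : ZMod p) = -1 := by
    rw [Nat.cast_sub NeZero.one_le, ZMod.natCast_self, Nat.cast_one, zero_sub]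
  calc ∑ a ∈ Ioo 1 (p - 1), f a = ∑ a ∈ range p, f a := by
        refine sum_subset (fun a ha => mem_range.mpr (by grind)) fun a ha hna => ?_
        obtain rfl | rfl | rfl : a = 0 ∨ a = 1 ∨ a = p - 1 := by grind
        · simpa using h0
        · simpa using h1
        · rwa [hcast]
    _ = ∑ x, f x :=
        sum_nbij' (↑) ZMod.val (by simp) (by simp [ZMod.val_lt])
          (fun a ha => ZMod.val_cast_of_lt (mem_range.mp ha)) (by simp) (by simp)

theorem ZMod.sum_filter_Ioo_eq_sum_filter_units {p : ℕ} [Fact p.Prime] {M : Type*}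
    [AddCommMonoid M] (P : ZMod p → Prop) [DecidablePred P] (hP1 : ¬P 1) (hPm1 : ¬P (-1))
    (f : ZMod p → M) (hf0 : f 0 = 0) :
    ∑ a ∈ (Ioo 1 (p - 1)).filter (fun a : ℕ => P a), f a =
      ∑ u ∈ univ.filter (fun u : (ZMod p)ˣ => P u), f u := by
  let F (x : ZMod p) : M := if P x then f x else 0
  have hF0 : F 0 = 0 := by simp [F, hf0]
  rw [sum_filter, sum_filter]
  exact (ZMod.sum_Ioo_eq_sum hF0 (by simp [F, hP1]) (by simp [F, hPm1])).trans
    (Fintype.sum_units_eq_sum hF0).symm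

theorem sum_two_adic_valuation_of_orders_general (p e' t' d : ℕ) (hp : p.Prime)
    (ht : Odd t') (he : 1 ≤ e') (hpe : p = 2 ^ e' * t' + 1)
    (hd : d ∣ t') :
    ∑ a ∈ (Finset.Ioo 1 (p - 1)).filter (fun a : ℕ => ((a : ZMod p)) ^ (2 * d) ≠ 1),
        padicValNat 2 (orderOf ((a : ZMod p))) =
      (e' - 1) * (p - 1) + t' - d := by
  have : Fact p.Prime := ⟨hp⟩
  obtain ⟨e, rfl⟩ : ∃ e, e' = e + 1 := ⟨e' - 1, by omega⟩
  have hG : Fintype.card (ZMod p)ˣ = 2 ^ (e + 1) * t' := by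
    rw [ZMod.card_units, hpe, Nat.add_sub_cancel]
  have hsmall := IsCyclic.sum_padicValNat_orderOf_of_pow_two_mul_eq_one (G := (ZMod p)ˣ)
    (ht.of_dvd_nat hd) (hG ▸ mul_dvd_mul (dvd_pow_self 2 e.succ_ne_zero) hd)
  have htotal := IsCyclic.sum_padicValNat_orderOf ht hG
  rw [← sum_filter_add_sum_filter_not univ (· ^ (2 * d) = 1), hsmall] at htotal
  rw [ZMod.sum_filter_Ioo_eq_sum_filter_units (· ^ (2 * d) ≠ 1) (by simp) (by simp [pow_mul])
    (fun x => padicValNat 2 (orderOf x)) (by simp [orderOf_zero])]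
  simp only [← Units.val_pow_eq_pow_val, Units.val_eq_one, orderOf_units, ne_eq]
  rw [show p - 1 = 2 ^ (e + 1) * t' by omega, Nat.add_sub_cancel]
  rw [add_mul, one_mul] at htotal
  omega

/-- For an odd prime `p = 2^e' · t' + 1` with `t'` odd, `e' ≥ 1`, and `d` a positive
divisor of `t'`, the sum of the 2-adic valuations of the orders of all `a` with
`1 < a < p - 1` and `a^(2d) ≢ 1 (mod p)` is `(e'-1)(p-1) + t' - d`. -/
theorem sum_two_adic_valuation_of_orders (p e' t' d : ℕ) (hp : p.Prime)
    (ht : Odd t') (he : 1 ≤ e') (hpe : p = 2 ^ e' * t' + 1)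
    (hdpos : 0 < d) (hd : d ∣ t') :
    ∑ a ∈ (Finset.Ioo 1 (p - 1)).filter (fun a : ℕ => ((a : ZMod p)) ^ (2 * d) ≠ 1),
        padicValNat 2 (orderOf ((a : ZMod p))) =
      (e' - 1) * (p - 1) + t' - d :=
  sum_two_adic_valuation_of_orders_general p e' t' d hp ht he hpe hd
end

section
/- Let p = 2^(e')·t' + 1 be an odd prime with t' odd and e' ≥ 1, and let d be a positive divisor of t'. If a is chosen uniformly at random from the integers in (1, p-1) satisfying a^(2d) ≢ 1 (mod p), then the expected value of v₂(ord_p(a)) is strictly greater than e' - 1. -/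
/-!
Work in the cyclic group `(ZMod p)ˣ` of order `2^e' t'`: the admissible `a` are the units `g` with
`g^(2d) ≠ 1`; call this set `F`. For every unit, `v₂(ord g) + #{k < e' | g^(2^k t') = 1} = e'`, so
by double counting the claim becomes `∑_{k<e'} A_k < #F`, where `A_k` counts the `g ∈ F` with
`g^(2^k t') = 1`. In a cyclic group of order `n` the equation `g^m = 1` has `gcd(n, m)` solutions,
whence, for `e' ≥ 1`, `A_0 = t' - d`, `A_k = 2^k t' - 2d` for `k ≥ 1` and `#F = 2^e' t' - 2d`.
The difference `#F - ∑ A_k = t' - d + 2d(e' - 1)` is positive: `d ≤ t'`, and `d < t'` when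
`e' = 1` because `F` is nonempty.
-/

open Finset

theorem Nat.dvd_two_pow_mul_odd_iff_padicValNat_le {n e t k : ℕ} (ht : Odd t)
    (hn : n ∣ 2 ^ e * t) : n ∣ 2 ^ k * t ↔ padicValNat 2 n ≤ k := by
  obtain ⟨v, m, hm, rfl⟩ := Nat.exists_eq_two_pow_mul_odd (ne_zero_of_dvd_ne_zero
    (mul_ne_zero (pow_ne_zero e two_ne_zero) ht.pos.ne') hn)
  have hmt : m ∣ t := (Nat.Coprime.pow_right e (Nat.coprime_two_right.mpr hm))
    |>.dvd_of_dvd_mul_left (dvd_of_mul_left_dvd hn)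
  rw [padicValNat.mul (by positivity) hm.pos.ne', padicValNat.prime_pow,
    padicValNat.eq_zero_of_not_dvd hm.not_two_dvd_nat, add_zero]
  refine ⟨fun h => ?_, fun h => mul_dvd_mul (pow_dvd_pow 2 h) hmt⟩
  refine (Nat.pow_dvd_pow_iff_le_right one_lt_two).mp ?_
  exact (Nat.Coprime.pow_left v (Nat.coprime_two_left.mpr ht)).dvd_of_dvd_mul_right
    (dvd_of_mul_right_dvd h)

section Monoid
variable {G : Type*} [Monoid G] [DecidableEq G] {e t : ℕ}

theorem padicValNat_orderOf_add_card_pow_eq_one (ht : Odd t) {x : G}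
    (hx : orderOf x ∣ 2 ^ e * t) :
    padicValNat 2 (orderOf x) + #{k ∈ range e | x ^ (2 ^ k * t) = 1} = e := by
  have hv : padicValNat 2 (orderOf x) ≤ e :=
    (Nat.dvd_two_pow_mul_odd_iff_padicValNat_le ht hx).mp hx
  have hfilter : {k ∈ range e | x ^ (2 ^ k * t) = 1} = Ico (padicValNat 2 (orderOf x)) e := by
    ext k
    rw [mem_filter, mem_range, mem_Ico, ← orderOf_dvd_iff_pow_eq_one,
      Nat.dvd_two_pow_mul_odd_iff_padicValNat_le ht hx, and_comm]
  rw [hfilter, Nat.card_Ico]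
  omega

theorem sum_padicValNat_orderOf_add_sum_card (ht : Odd t) (s : Finset G)
    (hs : ∀ g ∈ s, orderOf g ∣ 2 ^ e * t) :
    ∑ g ∈ s, padicValNat 2 (orderOf g) + ∑ k ∈ range e, #{g ∈ s | g ^ (2 ^ k * t) = 1}
      = e * #s := by
  have hswap := sum_card_bipartiteAbove_eq_sum_card_bipartiteBelow
    (fun (g : G) k => g ^ (2 ^ k * t) = 1) (s := s) (t := range e)
  simp only [bipartiteAbove, bipartiteBelow] at hswap
  rw [← hswap, ← sum_add_distrib,
    sum_congr rfl fun g hg => padicValNat_orderOf_add_card_pow_eq_one ht (hs g hg),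
    sum_const, smul_eq_mul, mul_comm]

end Monoid

section Cyclic
variable {G : Type*} [CommGroup G] [IsCyclic G] [Fintype G] [DecidableEq G]

theorem IsCyclic.card_pow_eq_one (m : ℕ) : #{g : G | g ^ m = 1} = (Nat.card G).gcd m := by
  rw [← IsCyclic.card_powMonoidHom_ker, ← Fintype.card_subtype, ← Nat.card_eq_fintype_card]
  rfl

theorem IsCyclic.card_pow_ne_one_pow_eq_one_add_gcd {m : ℕ} (hm : m ∣ Nat.card G) (b : ℕ) :
    #{g ∈ ({g | g ^ b ≠ 1} : Finset G) | g ^ m = 1} + m.gcd b = m := by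
  have hsplit := card_filter_add_card_filter_not (s := ({g | g ^ m = 1} : Finset G))
    (fun g => g ^ b ≠ 1)
  simp only [filter_filter, ne_eq, not_not, ← pow_gcd_eq_one, and_comm] at hsplit ⊢
  rwa [IsCyclic.card_pow_eq_one, IsCyclic.card_pow_eq_one, Nat.gcd_eq_right hm,
    Nat.gcd_eq_right ((Nat.gcd_dvd_left m b).trans hm)] at hsplit

variable {e t d : ℕ}

theorem IsCyclic.sum_card_pow_two_pow_mul_eq_one_add (hG : Nat.card G = 2 ^ e * t) (ht : Odd t)
    (hd : d ∣ t) {j : ℕ} (hj : j < e) :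
    ∑ k ∈ range (j + 1), #{g ∈ ({g | g ^ (2 * d) ≠ 1} : Finset G) | g ^ (2 ^ k * t) = 1}
      + t + d + 2 * d * j = 2 ^ (j + 1) * t := by
  have hcount : ∀ k ≤ e, #{g ∈ ({g | g ^ (2 * d) ≠ 1} : Finset G) | g ^ (2 ^ k * t) = 1}
      + (2 ^ k * t).gcd (2 * d) = 2 ^ k * t := fun k hk =>
    IsCyclic.card_pow_ne_one_pow_eq_one_add_gcd (hG ▸ mul_dvd_mul_right (pow_dvd_pow 2 hk) t) _
  induction j with
  | zero =>
    have h0 := hcount 0 (Nat.zero_le e)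
    rw [pow_zero, one_mul, Nat.Coprime.gcd_mul_left_cancel_right d (Nat.coprime_two_left.mpr ht),
      Nat.gcd_eq_right hd] at h0
    rw [sum_range_one, pow_zero, one_mul]
    omega
  | succ j ih =>
    have hsucc := hcount (j + 1) hj.le
    rw [Nat.gcd_eq_right (mul_dvd_mul (dvd_pow_self 2 j.succ_ne_zero) hd)] at hsucc
    rw [sum_range_succ, pow_succ 2 (j + 1)]
    linarith [ih (by omega)]

theorem IsCyclic.sub_one_mul_card_lt_sum_padicValNat_orderOf (hG : Nat.card G = 2 ^ e * t)
    (ht : Odd t) (hd : d ∣ t) (hne : ({g | g ^ (2 * d) ≠ 1} : Finset G).Nonempty) :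
    ((e : ℚ) - 1) * #({g | g ^ (2 * d) ≠ 1} : Finset G)
      < ∑ g ∈ ({g | g ^ (2 * d) ≠ 1} : Finset G), (padicValNat 2 (orderOf g) : ℚ) := by
  set F : Finset G := {g | g ^ (2 * d) ≠ 1}
  have hcount := sum_padicValNat_orderOf_add_sum_card ht F fun g _ => hG ▸ orderOf_dvd_natCard g
  suffices hlt : ∑ k ∈ range e, #{g ∈ F | g ^ (2 ^ k * t) = 1} < #F by
    have hcount' : ∑ g ∈ F, (padicValNat 2 (orderOf g) : ℚ)
        + ∑ k ∈ range e, (#{g ∈ F | g ^ (2 ^ k * t) = 1} : ℚ) = e * #F := by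
      exact_mod_cast hcount
    have hlt' : ∑ k ∈ range e, (#{g ∈ F | g ^ (2 ^ k * t) = 1} : ℚ) < #F := by
      exact_mod_cast hlt
    linarith
  obtain _ | m := e
  · simpa using hne.card_pos
  have hF : #F + 2 * d = 2 ^ (m + 1) * t := by
    have := IsCyclic.card_pow_ne_one_pow_eq_one_add_gcd (G := G) hG.symm.dvd (2 * d)
    rwa [filter_true_of_mem fun g _ => hG ▸ pow_card_eq_one',
      Nat.gcd_eq_right (mul_dvd_mul (dvd_pow_self 2 m.succ_ne_zero) hd)] at this
  have hsum : ∑ k ∈ range (m + 1), #{g ∈ F | g ^ (2 ^ k * t) = 1} + t + d + 2 * d * m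
      = 2 ^ (m + 1) * t := IsCyclic.sum_card_pow_two_pow_mul_eq_one_add hG ht hd m.lt_succ_self
  have hdt : d ≤ t := Nat.le_of_dvd ht.pos hd
  have hFpos := hne.card_pos
  rcases m.eq_zero_or_pos with rfl | hm
  · omega
  · nlinarith [ht.pos, Nat.le_mul_of_pos_right d hm]

end Cyclic

theorem ZMod.val_neg_one' {p : ℕ} [NeZero p] : (-1 : ZMod p).val = p - 1 := by
  obtain ⟨n, rfl⟩ := Nat.exists_eq_succ_of_ne_zero (NeZero.ne p)
  exact ZMod.val_neg_one n

theorem ZMod.sum_Ioo_filter_eq_sum_units {p : ℕ} [Fact p.Prime] {M : Type*} [AddCommMonoid M]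
    {P : ZMod p → Prop} [DecidablePred P] (h1 : ¬P 1) (hneg1 : ¬P (-1)) (f : ZMod p → M) :
    ∑ a ∈ (Ioo 1 (p - 1)).filter (fun a : ℕ => P a), f a =
      ∑ u ∈ univ.filter (fun u : (ZMod p)ˣ => P u), f u := by
  symm
  refine sum_nbij (fun u => (u : ZMod p).val) (fun u hu => ?_)
    (fun u _ v _ h => Units.ext (ZMod.val_injective p h)) (fun a ha => ?_)
    (fun u _ => by rw [ZMod.natCast_zmod_val])
  · simp only [mem_filter, mem_univ, true_and] at hu
    have h0 : (u : ZMod p).val ≠ 0 := (ZMod.val_ne_zero _).mpr u.ne_zero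
    have h1' : (u : ZMod p).val ≠ 1 := fun h => h1 <| by
      rwa [← ZMod.natCast_zmod_val (u : ZMod p), h, Nat.cast_one] at hu
    have hneg1' : (u : ZMod p).val ≠ p - 1 := fun h => hneg1 <| by
      rwa [ZMod.val_injective p (h.trans ZMod.val_neg_one'.symm)] at hu
    have := ZMod.val_lt (u : ZMod p)
    rw [mem_filter, mem_Ioo, ZMod.natCast_zmod_val]
    exact ⟨⟨by omega, by omega⟩, hu⟩
  · rw [mem_coe, mem_filter, mem_Ioo] at ha
    have hap : a < p := by omega
    have ha0 : (a : ZMod p) ≠ 0 := by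
      rw [Ne, ZMod.natCast_eq_zero_iff]
      exact fun h => absurd (Nat.le_of_dvd (by omega) h) (by omega)
    refine ⟨Units.mk0 _ ha0, by simpa using ha.2, ZMod.val_cast_of_lt hap⟩

theorem expected_two_adic_valuation_general (p e' t' d : ℕ) (hp : p.Prime)
    (ht : Odd t') (hpe : p = 2 ^ e' * t' + 1)
    (hd : d ∣ t')
    (hne : ((Finset.Ioo 1 (p - 1)).filter
      (fun a : ℕ => ((a : ZMod p)) ^ (2 * d) ≠ 1)).Nonempty) :
    ((e' : ℚ) - 1) <
      (∑ a ∈ (Finset.Ioo 1 (p - 1)).filter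
          (fun a : ℕ => ((a : ZMod p)) ^ (2 * d) ≠ 1),
            (padicValNat 2 (orderOf ((a : ZMod p))) : ℚ)) /
        (((Finset.Ioo 1 (p - 1)).filter
          (fun a : ℕ => ((a : ZMod p)) ^ (2 * d) ≠ 1)).card : ℚ) := by
  have := Fact.mk hp
  have hG : Nat.card (ZMod p)ˣ = 2 ^ e' * t' := by
    rw [Nat.card_eq_fintype_card, ZMod.card_units]
    omega
  have h1 : ¬(1 : ZMod p) ^ (2 * d) ≠ 1 := by simp
  have hneg1 : ¬(-1 : ZMod p) ^ (2 * d) ≠ 1 := by simp [pow_mul]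
  have hsum := ZMod.sum_Ioo_filter_eq_sum_units (P := fun x => x ^ (2 * d) ≠ 1) h1 hneg1
    fun x => (padicValNat 2 (orderOf x) : ℚ)
  have hcard := ZMod.sum_Ioo_filter_eq_sum_units (P := fun x => x ^ (2 * d) ≠ 1) h1 hneg1
    fun _ => 1
  simp only [← card_eq_sum_ones] at hcard
  simp only [← Units.val_pow_eq_pow_val, ne_eq, Units.val_eq_one, orderOf_units] at hsum hcard hne ⊢
  rw [← card_pos, hcard, card_pos] at hne
  rw [hcard, hsum, lt_div_iff₀ (by exact_mod_cast hne.card_pos)]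
  simpa only [ne_eq] using IsCyclic.sub_one_mul_card_lt_sum_padicValNat_orderOf hG ht hd hne

/-- For an odd prime `p = 2^e' · t' + 1` with `t'` odd, `e' ≥ 1`, and `d` a positive
divisor of `t'`: the average (expected value under the uniform distribution) of
`v₂(ord_p(a))` over the integers `a ∈ (1, p-1)` with `a^(2d) ≢ 1 (mod p)` is strictly
greater than `e' - 1`. -/
theorem expected_two_adic_valuation (p e' t' d : ℕ) (hp : p.Prime)
    (ht : Odd t') (he : 1 ≤ e') (hpe : p = 2 ^ e' * t' + 1)
    (hdpos : 0 < d) (hd : d ∣ t')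
    (hne : ((Finset.Ioo 1 (p - 1)).filter
      (fun a : ℕ => ((a : ZMod p)) ^ (2 * d) ≠ 1)).Nonempty) :
    ((e' : ℚ) - 1) <
      (∑ a ∈ (Finset.Ioo 1 (p - 1)).filter
          (fun a : ℕ => ((a : ZMod p)) ^ (2 * d) ≠ 1),
            (padicValNat 2 (orderOf ((a : ZMod p))) : ℚ)) /
        (((Finset.Ioo 1 (p - 1)).filter
          (fun a : ℕ => ((a : ZMod p)) ^ (2 * d) ≠ 1)).card : ℚ) :=
  expected_two_adic_valuation_general p e' t' d hp ht hpe hd hne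
end
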